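/- Let q ≥ 2 be an integer and F a CDF on [0,1] satisfying the stationarity functional equation F(x) = F(0) + Σ_{j=0}^{q-1}[F((x+j)/q) − F(j/q)] for all x ∈ [0,1]. If the measure dF is absolutely continuous with respect to Lebesgue measure, then F(x) = x for all x ∈ [0,1]. -/

import Mathlib

/-!
When `F 0 = 0` the functional equation says that `dF` is invariant under `x ↦ q x mod 1`, and
iterating it gives the same equation with `q ^ n` in place of `q`. With `h` the density of `dF`
this reads `F x = ∑_{k < N} ∫_{k/N}^{(k+x)/N} h` for `N = q ^ n`. For every integrable `h` these
sums tend to `x ∫_0^1 h` as `N → ∞`: this holds for continuous `g`, which is almost constant on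
each cell, and replacing `h` by `g` moves the sum and the limit by at most `2 ∫_0^1 |h - g|`, so
density of continuous functions in `L¹` does the rest. Hence `F x = x ∫_0^1 h = x`.
-/

open MeasureTheory Filter Topology

theorem Finset.sum_range_mul_eq_sum_sum {M : Type*} [AddCommMonoid M] (f : ℕ → M) (a b : ℕ) :
    ∑ m ∈ range (a * b), f m = ∑ i ∈ range a, ∑ j ∈ range b, f (i * b + j) := by
  induction a with
  | zero => simp
  | succ a ih => rw [sum_range_succ, ← ih, Nat.succ_mul, sum_range_add]

def IsStationaryCDF (p : ℕ) (F : ℝ → ℝ) : Prop :=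
  ∀ x ∈ Set.Icc (0 : ℝ) 1, F x = ∑ j ∈ Finset.range p, (F ((x + j) / p) - F ((j : ℝ) / p))

theorem add_div_mem_Icc {p j : ℕ} (hj : j < p) {x : ℝ} (hx : x ∈ Set.Icc (0 : ℝ) 1) :
    (x + j) / p ∈ Set.Icc (0 : ℝ) 1 := by
  have hjp : (j : ℝ) + 1 ≤ p := by exact_mod_cast hj
  obtain ⟨hx0, hx1⟩ := hx
  have hj0 : (0 : ℝ) ≤ j := j.cast_nonneg
  exact ⟨by positivity, (div_le_one (by linarith)).mpr (by linarith)⟩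

namespace IsStationaryCDF

variable {F : ℝ → ℝ}

theorem one (hF : F 0 = 0) : IsStationaryCDF 1 F := by
  intro x _
  simp [hF]

theorem mul {p r : ℕ} (hp : IsStationaryCDF p F) (hr : IsStationaryCDF r F) :
    IsStationaryCDF (p * r) F := by
  intro x hx
  have hcell : ∀ k < r, ∀ j < p, ∀ y : ℝ,
      ((y + k) / r + j) / p = (y + ↑(j * r + k)) / ↑(p * r) := by
    intro k hk j hj y
    have : (r : ℝ) ≠ 0 := by exact_mod_cast (by omega : r ≠ 0)
    have : (p : ℝ) ≠ 0 := by exact_mod_cast (by omega : p ≠ 0)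
    push_cast
    field_simp
    ring
  calc F x = ∑ k ∈ Finset.range r, (F ((x + k) / r) - F ((k : ℝ) / r)) := hr x hx
    _ = ∑ k ∈ Finset.range r, ∑ j ∈ Finset.range p,
          (F ((x + ↑(j * r + k)) / ↑(p * r)) - F (↑(j * r + k) / ↑(p * r))) := by
        refine Finset.sum_congr rfl fun k hk => ?_
        rw [Finset.mem_range] at hk
        have hFk := hp _ (add_div_mem_Icc hk (Set.left_mem_Icc.mpr zero_le_one))
        rw [zero_add] at hFk
        rw [hp _ (add_div_mem_Icc hk hx), hFk, ← Finset.sum_sub_distrib]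
        refine Finset.sum_congr rfl fun j hj => ?_
        rw [Finset.mem_range] at hj
        have hcell0 := hcell k hk j hj 0
        rw [zero_add, zero_add] at hcell0
        rw [hcell k hk j hj, hcell0]
        ring
    _ = _ := by rw [Finset.sum_comm, Finset.sum_range_mul_eq_sum_sum]

theorem pow {p : ℕ} (hF : F 0 = 0) (hp : IsStationaryCDF p F) (n : ℕ) :
    IsStationaryCDF (p ^ n) F := by
  induction n with
  | zero => simpa using one hF
  | succ n ih => rw [pow_succ]; exact ih.mul hp

end IsStationaryCDF

section Cells

variable {a w x : ℝ}

theorem abs_intervalIntegral_sub_mul_le_integral_abs {f : ℝ → ℝ}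
    (hf : IntervalIntegrable f volume a (a + w)) (hw : 0 ≤ w) (hx : x ∈ Set.Icc (0 : ℝ) 1) :
    |(∫ t in a..a + x * w, f t) - x * ∫ t in a..a + w, f t| ≤ 2 * ∫ t in a..a + w, |f t| := by
  obtain ⟨hx0, hx1⟩ := hx
  have hxw : x * w ≤ w := mul_le_of_le_one_left hw hx1
  have hpart : |∫ t in a..a + x * w, f t| ≤ ∫ t in a..a + w, |f t| :=
    (intervalIntegral.abs_integral_le_integral_abs (by nlinarith)).trans <|
      intervalIntegral.integral_mono_interval le_rfl (by nlinarith) (by linarith)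
        (Eventually.of_forall fun _ => abs_nonneg _) hf.abs
  have hwhole : |x * ∫ t in a..a + w, f t| ≤ ∫ t in a..a + w, |f t| := by
    rw [abs_mul, abs_of_nonneg hx0]
    exact (mul_le_of_le_one_left (abs_nonneg _) hx1).trans
      (intervalIntegral.abs_integral_le_integral_abs (by linarith))
  linarith [abs_sub _ _ |>.trans (add_le_add hpart hwhole)]

theorem abs_intervalIntegral_sub_mul_le_of_abs_sub_le {g : ℝ → ℝ} {ε : ℝ}
    (hg : IntervalIntegrable g volume a (a + w)) (hw : 0 ≤ w) (hx : x ∈ Set.Icc (0 : ℝ) 1)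
    (hε : ∀ t ∈ Set.Icc a (a + w), |g t - g a| ≤ ε) :
    |(∫ t in a..a + x * w, g t) - x * ∫ t in a..a + w, g t| ≤ 2 * ε * w := by
  obtain ⟨hx0, hx1⟩ := hx
  have hxw : x * w ≤ w := mul_le_of_le_one_left hw hx1
  have hosc : ∀ b ∈ Set.Icc a (a + w),
      |∫ t in a..b, (g t - g a)| ≤ ε * (b - a) := by
    rintro b ⟨hab, hbw⟩
    simpa [abs_of_nonneg (sub_nonneg.mpr hab)] using
      intervalIntegral.norm_integral_le_of_norm_le_const (a := a) (b := b) (C := ε)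
        (f := fun t => g t - g a) fun t ht => by
          rw [Set.uIoc_of_le hab] at ht
          exact hε t ⟨ht.1.le, ht.2.trans hbw⟩
  have hsub : ∀ b ∈ Set.Icc a (a + w),
      ∫ t in a..b, (g t - g a) = (∫ t in a..b, g t) - (b - a) * g a := by
    intro b hb
    rw [intervalIntegral.integral_sub _ intervalIntegrable_const, intervalIntegral.integral_const,
      smul_eq_mul]
    exact hg.mono_set (Set.uIcc_subset_uIcc_left (Set.mem_uIcc_of_le hb.1 hb.2))
  have hpart := hosc (a + x * w) ⟨by nlinarith, by linarith⟩
  have hwhole := hosc (a + w) ⟨by linarith, le_rfl⟩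
  rw [hsub _ ⟨by nlinarith, by linarith⟩] at hpart
  rw [hsub _ ⟨by linarith, le_rfl⟩] at hwhole
  rw [abs_le] at hpart hwhole ⊢
  constructor <;> nlinarith

theorem abs_intervalIntegral_sub_mul_le_of_approx {h g : ℝ → ℝ} {ε : ℝ}
    (hh : IntervalIntegrable h volume a (a + w)) (hg : IntervalIntegrable g volume a (a + w))
    (hw : 0 ≤ w) (hx : x ∈ Set.Icc (0 : ℝ) 1) (hε : ∀ t ∈ Set.Icc a (a + w), |g t - g a| ≤ ε) :
    |(∫ t in a..a + x * w, h t) - x * ∫ t in a..a + w, h t|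
      ≤ 2 * (∫ t in a..a + w, |h t - g t|) + 2 * ε * w := by
  have hsub : Set.uIcc a (a + x * w) ⊆ Set.uIcc a (a + w) :=
    Set.uIcc_subset_uIcc_left (Set.mem_uIcc_of_le (by nlinarith [hx.1]) (by nlinarith [hx.2]))
  have hsplit : (∫ t in a..a + x * w, h t) - x * ∫ t in a..a + w, h t
      = ((∫ t in a..a + x * w, (h t - g t)) - x * ∫ t in a..a + w, (h t - g t))
        + ((∫ t in a..a + x * w, g t) - x * ∫ t in a..a + w, g t) := by
    rw [intervalIntegral.integral_sub (hh.mono_set hsub) (hg.mono_set hsub),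
      intervalIntegral.integral_sub hh hg]
    ring
  rw [hsplit]
  exact (abs_add_le _ _).trans (add_le_add
    (abs_intervalIntegral_sub_mul_le_integral_abs (hh.sub hg) hw hx)
    (abs_intervalIntegral_sub_mul_le_of_abs_sub_le hg hw hx hε))

end Cells

theorem sum_intervalIntegral_range_div {f : ℝ → ℝ} (hf : IntervalIntegrable f volume 0 1)
    {N : ℕ} (hN : N ≠ 0) :
    ∑ k ∈ Finset.range N, ∫ t in (k : ℝ) / N..(k : ℝ) / N + 1 / N, f t
      = ∫ t in (0 : ℝ)..1, f t := by
  have hN' : (N : ℝ) ≠ 0 := by exact_mod_cast hN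
  have hmem : ∀ k ≤ N, (k : ℝ) / N ∈ Set.uIcc (0 : ℝ) 1 := fun k hk =>
    Set.mem_uIcc_of_le (by positivity) ((div_le_one (by positivity)).mpr (by exact_mod_cast hk))
  have hstep : ∀ k : ℕ, (k : ℝ) / N + 1 / N = ((k + 1 : ℕ) : ℝ) / N := fun k => by
    push_cast; ring
  simp_rw [hstep]
  rw [intervalIntegral.sum_integral_adjacent_intervals (a := fun k : ℕ => (k : ℝ) / N)]
  · simp [hN']
  · exact fun k hk => hf.mono_set (Set.uIcc_subset_uIcc (hmem k hk.le) (hmem (k + 1) hk))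

theorem tendsto_sum_intervalIntegral_cells {h : ℝ → ℝ} (hh : Integrable h) {x : ℝ}
    (hx : x ∈ Set.Icc (0 : ℝ) 1) :
    Tendsto (fun N : ℕ => ∑ k ∈ Finset.range N, ∫ t in (k : ℝ) / N..(x + k) / N, h t) atTop
      (𝓝 (x * ∫ t in (0 : ℝ)..1, h t)) := by
  rw [Metric.tendsto_atTop]
  intro ε hε
  obtain ⟨g, hg_supp, hg_L1, hg_cont, hg_int⟩ :=
    hh.exists_hasCompactSupport_integral_sub_le (by positivity : 0 < ε / 8)
  obtain ⟨δ, hδ, hgδ⟩ := Metric.uniformContinuous_iff.mp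
    (hg_cont.uniformContinuous_of_tendsto_cocompact hg_supp.is_zero_at_infty) (ε / 4)
    (by positivity)
  obtain ⟨N₀, hN₀⟩ := exists_nat_one_div_lt hδ
  refine ⟨N₀ + 1, fun N hN => ?_⟩
  have hN' : N ≠ 0 := by omega
  have hN : (N₀ : ℝ) + 1 ≤ N := by exact_mod_cast hN
  have hN0 : (0 : ℝ) < N := by linarith [(N₀.cast_nonneg : (0 : ℝ) ≤ N₀)]
  have hNδ : 1 / (N : ℝ) < δ := (one_div_le_one_div_of_le (by positivity) hN).trans_lt hN₀
  have hcell : ∀ k : ℕ, (x + k) / N = k / N + x * (1 / N) := fun k => by ring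
  have hosc : ∀ k : ℕ, ∀ t ∈ Set.Icc ((k : ℝ) / N) (k / N + 1 / N),
      |g t - g (k / N)| ≤ ε / 4 := fun k t ht =>
    (hgδ (by rw [Real.dist_eq, abs_of_nonneg (by linarith [ht.1])]; linarith [ht.2])).le
  have hL1 : ∫ t in (0 : ℝ)..1, |h t - g t| ≤ ε / 8 := by
    rw [intervalIntegral.integral_of_le zero_le_one]
    exact (setIntegral_le_integral (hh.sub hg_int).abs
      (Eventually.of_forall fun _ => abs_nonneg _)).trans hg_L1
  calc dist (∑ k ∈ Finset.range N, ∫ t in (k : ℝ) / N..(x + k) / N, h t)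
        (x * ∫ t in (0 : ℝ)..1, h t)
      = |∑ k ∈ Finset.range N, ((∫ t in (k : ℝ) / N..k / N + x * (1 / N), h t)
          - x * ∫ t in (k : ℝ) / N..k / N + 1 / N, h t)| := by
        rw [Real.dist_eq, Finset.sum_sub_distrib, ← Finset.mul_sum,
          sum_intervalIntegral_range_div hh.intervalIntegrable hN']
        simp_rw [hcell]
    _ ≤ ∑ k ∈ Finset.range N, |(∫ t in (k : ℝ) / N..k / N + x * (1 / N), h t)
          - x * ∫ t in (k : ℝ) / N..k / N + 1 / N, h t| := Finset.abs_sum_le_sum_abs _ _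
    _ ≤ ∑ k ∈ Finset.range N,
          (2 * (∫ t in (k : ℝ) / N..k / N + 1 / N, |h t - g t|) + 2 * (ε / 4) * (1 / N)) :=
        Finset.sum_le_sum fun k _ => abs_intervalIntegral_sub_mul_le_of_approx
          hh.intervalIntegrable hg_int.intervalIntegrable (by positivity) hx (hosc k)
    _ = 2 * (∫ t in (0 : ℝ)..1, |h t - g t|) + ε / 2 := by
        rw [Finset.sum_add_distrib, ← Finset.mul_sum,
          sum_intervalIntegral_range_div (f := fun t => |h t - g t|)
            (hh.sub hg_int).abs.intervalIntegrable hN',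
          Finset.sum_const, Finset.card_range, nsmul_eq_mul]
        field_simp
        ring
    _ < ε := by linarith

theorem measureReal_Iic_sub_Iic_eq_intervalIntegral_rnDeriv {μ : Measure ℝ} [IsFiniteMeasure μ]
    (hμ : μ ≪ volume) (a b : ℝ) :
    μ.real (Set.Iic b) - μ.real (Set.Iic a) = ∫ t in a..b, (μ.rnDeriv volume t).toReal := by
  rw [← Measure.setIntegral_toReal_rnDeriv hμ, ← Measure.setIntegral_toReal_rnDeriv hμ]
  exact intervalIntegral.integral_Iic_sub_Iic Measure.integrable_toReal_rnDeriv.integrableOn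
    Measure.integrable_toReal_rnDeriv.integrableOn

/-- If the CDF of a probability measure on `[0,1]` satisfies the stationarity functional
equation and the measure is absolutely continuous w.r.t. Lebesgue measure, then the CDF
is the uniform CDF on `[0,1]`. -/
theorem stmt_6 (q : ℕ) (hq : 2 ≤ q) (μ : Measure ℝ) [IsProbabilityMeasure μ]
    (hsupp : μ (Set.Icc 0 1) = 1)
    (F : ℝ → ℝ) (hF : ∀ x, F x = (μ (Set.Iic x)).toReal)
    (heq : ∀ x ∈ Set.Icc (0 : ℝ) 1,
      F x = F 0 + ∑ j ∈ Finset.range q, (F ((x + j) / q) - F ((j : ℝ) / q)))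
    (hac : μ ≪ volume) :
    ∀ x ∈ Set.Icc (0 : ℝ) 1, F x = x := by
  have hFint (a b : ℝ) : F b - F a = ∫ t in a..b, (μ.rnDeriv volume t).toReal := by
    rw [hF, hF]
    exact measureReal_Iic_sub_Iic_eq_intervalIntegral_rnDeriv hac a b
  have hF0 : F 0 = 0 := by
    have hout : μ (Set.Icc (0 : ℝ) 1)ᶜ = 0 := (prob_compl_eq_zero_iff measurableSet_Icc).mpr hsupp
    have hIic : Set.Iic (0 : ℝ) ⊆ (Set.Icc 0 1)ᶜ ∪ {0} := fun t ht => by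
      rcases (Set.mem_Iic.mp ht).lt_or_eq with ht | ht
      · exact Or.inl fun h => ht.not_ge h.1
      · exact Or.inr ht
    rw [hF, measure_mono_null hIic (measure_union_null hout (hac Real.volume_singleton)),
      ENNReal.toReal_zero]
  have hF1 : F 1 = 1 := by
    rw [hF, le_antisymm prob_le_one (hsupp ▸ measure_mono Set.Icc_subset_Iic_self),
      ENNReal.toReal_one]
  have hstat : IsStationaryCDF q F := fun x hx => by simpa [hF0] using heq x hx
  intro x hx
  have hcells (n : ℕ) : ∑ k ∈ Finset.range (q ^ n),
      ∫ t in (k : ℝ) / ↑(q ^ n)..(x + k) / ↑(q ^ n), (μ.rnDeriv volume t).toReal = F x := by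
    rw [hstat.pow hF0 n x hx]
    exact Finset.sum_congr rfl fun k _ => (hFint _ _).symm
  have hlim := (tendsto_sum_intervalIntegral_cells
    (μ.integrable_toReal_rnDeriv (ν := volume)) hx).comp
    (tendsto_pow_atTop_atTop_of_one_lt (by omega : 1 < q))
  rw [← hFint, hF1, hF0, sub_zero, mul_one] at hlim
  exact tendsto_nhds_unique tendsto_const_nhds (Tendsto.congr hcells hlim)
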